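/- Let ψ be a unit vector in ℂ^a ⊗ ℂ^b ⊗ ℂ^c (factors labeled P, Q, R), let ρ_{PQ} = Tr_R(|ψ⟩⟨ψ|) be the reduced state on ℂ^a ⊗ ℂ^b, and let Π be the orthogonal projection of ℂ^a ⊗ ℂ^b onto the range of ρ_{PQ}. Then ker(Tr_Q ρ_{PQ}) = ker(Tr_Q Π): the reduced state of ψ on the first factor and the partial trace over Q of the Schmidt-span projector Π have the same kernel. -/

import Mathlib

open scoped BigOperators Matrix

namespace Stab

/-- Partial trace over the third factor `R` of `ℂ^a ⊗ ℂ^b ⊗ ℂ^c`. -/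
noncomputable def ptraceR {a b c : ℕ}
    (M : Matrix (Fin a × Fin b × Fin c) (Fin a × Fin b × Fin c) ℂ) :
    Matrix (Fin a × Fin b) (Fin a × Fin b) ℂ :=
  fun p q => ∑ k, M (p.1, p.2, k) (q.1, q.2, k)

/-- Partial trace over the second factor `Q` of `ℂ^a ⊗ ℂ^b`. -/
noncomputable def ptraceQ {a b : ℕ}
    (M : Matrix (Fin a × Fin b) (Fin a × Fin b) ℂ) : Matrix (Fin a) (Fin a) ℂ :=
  fun i i' => ∑ j, M (i, j) (i', j)

/-- The rank-one projector `|ψ⟩⟨ψ|`. -/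
noncomputable def proj {ι : Type*} (ψ : ι → ℂ) : Matrix ι ι ℂ :=
  fun x y => ψ x * (starRingEnd ℂ) (ψ y)

/-- `P` is the orthogonal projection matrix onto the subspace `V`. -/
def IsOrthProjOnto {ι : Type*} [Fintype ι] [DecidableEq ι]
    (P : Matrix ι ι ℂ) (V : Submodule ℂ (ι → ℂ)) : Prop :=
  Pᴴ = P ∧ P * P = P ∧ LinearMap.range P.mulVecLin = V

/-!
Both `ρ = Tr_R |ψ⟩⟨ψ|` and the projector `P` onto its range are Hermitian with the same range,
hence (kernel = orthogonal complement of range) with the same kernel. For a positive semidefinite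
`M` on `ℂ^a ⊗ ℂ^b`, the quadratic form of `Tr_Q M` at `v` is `∑ⱼ ⟨v ⊗ eⱼ, M (v ⊗ eⱼ)⟩`, a sum of
nonnegative terms, so `v ∈ ker (Tr_Q M)` iff `v ⊗ eⱼ ∈ ker M` for every `j`. Thus the kernel of
`Tr_Q M` depends only on the kernel of `M`, and `ρ`, `P` are both positive semidefinite.
-/

end Stab

open Matrix
open scoped ComplexOrder

namespace Matrix

variable {n 𝕜 : Type*} [Fintype n] [RCLike 𝕜]

theorem IsHermitian.mulVec_eq_zero_iff_forall_mem_range {A : Matrix n n 𝕜} (hA : A.IsHermitian)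
    (v : n → 𝕜) : A *ᵥ v = 0 ↔ ∀ u ∈ LinearMap.range A.mulVecLin, star u ⬝ᵥ v = 0 := by
  have adjoint : ∀ w, star (A *ᵥ w) ⬝ᵥ v = star w ⬝ᵥ (A *ᵥ v) := fun w => by
    rw [star_mulVec, hA.eq, ← dotProduct_mulVec]
  constructor
  · rintro h u ⟨w, rfl⟩
    rw [mulVecLin_apply, adjoint, h, dotProduct_zero]
  · intro h
    have hself := h _ ⟨A *ᵥ v, rfl⟩
    rw [mulVecLin_apply, adjoint] at hself
    exact dotProduct_star_self_eq_zero.mp hself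

theorem IsHermitian.ker_mulVecLin_eq_of_range_eq {A B : Matrix n n 𝕜} (hA : A.IsHermitian)
    (hB : B.IsHermitian) (h : LinearMap.range A.mulVecLin = LinearMap.range B.mulVecLin) :
    LinearMap.ker A.mulVecLin = LinearMap.ker B.mulVecLin := by
  ext v
  simp only [LinearMap.mem_ker, mulVecLin_apply]
  rw [hA.mulVec_eq_zero_iff_forall_mem_range, hB.mulVec_eq_zero_iff_forall_mem_range, h]

theorem IsHermitian.posSemidef_of_mul_self_eq {P : Matrix n n 𝕜} (hP : P.IsHermitian)
    (hPP : P * P = P) : P.PosSemidef := by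
  simpa only [hP.eq, hPP] using posSemidef_conjTranspose_mul_self P

end Matrix

namespace Stab

variable {a b : ℕ}

def tmulSingle (v : Fin a → ℂ) (j : Fin b) : Fin a × Fin b → ℂ :=
  fun p => if p.2 = j then v p.1 else 0

theorem ptraceQ_mulVec_apply (M : Matrix (Fin a × Fin b) (Fin a × Fin b) ℂ) (v : Fin a → ℂ)
    (i : Fin a) : (ptraceQ M *ᵥ v) i = ∑ j, (M *ᵥ tmulSingle v j) (i, j) := by
  simp only [mulVec, dotProduct, ptraceQ, tmulSingle, Fintype.sum_prod_type, mul_ite, mul_zero,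
    Finset.sum_ite_eq', Finset.mem_univ, if_true, Finset.sum_mul]
  exact Finset.sum_comm

theorem star_dotProduct_ptraceQ_mulVec (M : Matrix (Fin a × Fin b) (Fin a × Fin b) ℂ)
    (v : Fin a → ℂ) :
    star v ⬝ᵥ (ptraceQ M *ᵥ v) = ∑ j, star (tmulSingle v j) ⬝ᵥ (M *ᵥ tmulSingle v j) := by
  calc star v ⬝ᵥ (ptraceQ M *ᵥ v) = ∑ i, star (v i) * ∑ j, (M *ᵥ tmulSingle v j) (i, j) := by
        simp only [dotProduct, Pi.star_apply, ptraceQ_mulVec_apply]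
    _ = ∑ j, ∑ i, star (v i) * (M *ᵥ tmulSingle v j) (i, j) := by
        simp_rw [Finset.mul_sum]
        exact Finset.sum_comm
    _ = ∑ j, star (tmulSingle v j) ⬝ᵥ (M *ᵥ tmulSingle v j) := by
        refine Finset.sum_congr rfl fun j _ => ?_
        simp only [dotProduct, Pi.star_apply, tmulSingle, Fintype.sum_prod_type, apply_ite star,
          star_zero, ite_mul, zero_mul, Finset.sum_ite_eq', Finset.mem_univ, if_true]

theorem ptraceQ_mulVec_eq_zero_iff {M : Matrix (Fin a × Fin b) (Fin a × Fin b) ℂ}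
    (hM : M.PosSemidef) (v : Fin a → ℂ) :
    ptraceQ M *ᵥ v = 0 ↔ ∀ j, M *ᵥ tmulSingle v j = 0 := by
  constructor
  · intro h j
    have hsum : ∑ j, star (tmulSingle v j) ⬝ᵥ (M *ᵥ tmulSingle v j) = 0 := by
      rw [← star_dotProduct_ptraceQ_mulVec, h, dotProduct_zero]
    have hj := (Finset.sum_eq_zero_iff_of_nonneg fun j _ =>
      hM.dotProduct_mulVec_nonneg (tmulSingle v j)).mp hsum j (Finset.mem_univ j)
    exact (hM.dotProduct_mulVec_zero_iff _).mp hj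
  · intro h
    funext i
    simp only [ptraceQ_mulVec_apply, h, Pi.zero_apply, Finset.sum_const_zero]

theorem ker_ptraceQ_eq_of_ker_eq {M N : Matrix (Fin a × Fin b) (Fin a × Fin b) ℂ}
    (hM : M.PosSemidef) (hN : N.PosSemidef)
    (h : LinearMap.ker M.mulVecLin = LinearMap.ker N.mulVecLin) :
    LinearMap.ker (ptraceQ M).mulVecLin = LinearMap.ker (ptraceQ N).mulVecLin := by
  ext v
  have hker : ∀ w, M *ᵥ w = 0 ↔ N *ᵥ w = 0 := fun w => by
    simpa only [LinearMap.mem_ker, mulVecLin_apply] using SetLike.ext_iff.mp h w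
  simp only [LinearMap.mem_ker, mulVecLin_apply, ptraceQ_mulVec_eq_zero_iff hM,
    ptraceQ_mulVec_eq_zero_iff hN, hker]

theorem ptraceR_proj_eq_mul_conjTranspose {c : ℕ} (ψ : Fin a × Fin b × Fin c → ℂ) :
    ptraceR (proj ψ) =
      Matrix.of (fun p k => ψ (p.1, p.2, k)) * (Matrix.of fun p k => ψ (p.1, p.2, k))ᴴ := by
  ext p q
  simp [ptraceR, proj, mul_apply]

theorem posSemidef_ptraceR_proj {c : ℕ} (ψ : Fin a × Fin b × Fin c → ℂ) :
    (ptraceR (proj ψ)).PosSemidef := by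
  rw [ptraceR_proj_eq_mul_conjTranspose]
  exact posSemidef_self_mul_conjTranspose _

theorem subsystem_kernel_eq_of_schmidt_projector_general {a b c : ℕ}
    (ψ : Fin a × Fin b × Fin c → ℂ)
    (P : Matrix (Fin a × Fin b) (Fin a × Fin b) ℂ)
    (hP : IsOrthProjOnto P (LinearMap.range (ptraceR (proj ψ)).mulVecLin)) :
    LinearMap.ker (ptraceQ (ptraceR (proj ψ))).mulVecLin =
      LinearMap.ker (ptraceQ P).mulVecLin := by
  obtain ⟨hPherm : P.IsHermitian, hPidem, hPrange⟩ := hP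
  have hρ := posSemidef_ptraceR_proj ψ
  exact ker_ptraceQ_eq_of_ker_eq hρ (hPherm.posSemidef_of_mul_self_eq hPidem)
    (hρ.isHermitian.ker_mulVecLin_eq_of_range_eq hPherm hPrange.symm)

/-- Lemma 4, kernels of reduced state and Schmidt-span projector:
for a unit vector `ψ ∈ ℂ^a ⊗ ℂ^b ⊗ ℂ^c` with reduced state `ρ_{PQ} = Tr_R |ψ⟩⟨ψ|` and
`P` the orthogonal projection onto the range of `ρ_{PQ}`, the partial traces over `Q` of
`ρ_{PQ}` and of `P` have the same kernel. -/
theorem subsystem_kernel_eq_of_schmidt_projector {a b c : ℕ}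
    (ψ : Fin a × Fin b × Fin c → ℂ) (hψ : ∑ x, Complex.normSq (ψ x) = 1)
    (P : Matrix (Fin a × Fin b) (Fin a × Fin b) ℂ)
    (hP : IsOrthProjOnto P (LinearMap.range (ptraceR (proj ψ)).mulVecLin)) :
    LinearMap.ker (ptraceQ (ptraceR (proj ψ))).mulVecLin =
      LinearMap.ker (ptraceQ P).mulVecLin :=
  subsystem_kernel_eq_of_schmidt_projector_general ψ P hP

end Stab
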